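/- Let G be a compact second countable group and suppose (N_k) is a decreasing sequence of closed subgroups of G with intersection N. Then for every Borel set B ⊆ G and every subsequence (n_k) there exist a further subsequence (n_{k_j}) and an m_G-conull Borel set X ⊆ G such that lim_{j→∞} (m_G)_x^{N_{k_j}}(B) = (m_G)_x^N(B) for all x ∈ X. -/

import Mathlib

noncomputable section

/-- A compact group `S` together with a continuous surjective homomorphism onto `L`. -/
structure CompactGroupOver (L : Type*) [Group L] [TopologicalSpace L] where
  S : Type
  [grp : Group S]
  [top : TopologicalSpace S]
  [tgrp : IsTopologicalGroup S]
  [cpt : CompactSpace S]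
  p : S →* L
  pcont : Continuous p
  psurj : Function.Surjective p

attribute [instance] CompactGroupOver.grp CompactGroupOver.top
  CompactGroupOver.tgrp CompactGroupOver.cpt

open MeasureTheory Set Pointwise Function

noncomputable instance : MeasurableSpace Circle := borel Circle
instance : BorelSpace Circle := ⟨rfl⟩

/-- A closed interval (closed arc) in the circle group `𝕋 = Circle`. -/
def IsClosedArc (I : Set Circle) : Prop :=
  ∃ a b : ℝ, a ≤ b ∧ b - a ≤ 2 * Real.pi ∧ I = ⇑Circle.exp '' Set.Icc a b

/-- The twisted torus `𝕋 ⋊ {-1,1}`, realized on `Circle × ℤˣ` with multiplication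
`(a,ε)(b,δ) = (a·b^ε, εδ)`. -/
def TT : Type := Circle × ℤˣ

namespace TT

instance instTopologicalSpace : TopologicalSpace TT :=
  inferInstanceAs (TopologicalSpace (Circle × ℤˣ))
instance instMeasurableSpace : MeasurableSpace TT :=
  inferInstanceAs (MeasurableSpace (Circle × ℤˣ))
instance instCompactSpace : CompactSpace TT :=
  inferInstanceAs (CompactSpace (Circle × ℤˣ))
instance instT2Space : T2Space TT :=
  inferInstanceAs (T2Space (Circle × ℤˣ))

/-- The circle component. -/
def circ (x : TT) : Circle := Prod.fst x

/-- The sign component. -/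
def sgn (x : TT) : ℤˣ := Prod.snd x

/-- Build an element of `𝕋 ⋊ {-1,1}` from its components. -/
def mk' (a : Circle) (e : ℤˣ) : TT := ((a, e) : Circle × ℤˣ)

instance instMul : Mul TT :=
  ⟨fun x y => mk' (x.circ * y.circ ^ ((x.sgn : ℤˣ) : ℤ)) (x.sgn * y.sgn)⟩
instance instOne : One TT := ⟨mk' 1 1⟩
instance instInv : Inv TT :=
  ⟨fun x => mk' (x.circ ^ (-((x.sgn : ℤˣ) : ℤ))) x.sgn⟩

@[simp] lemma mul_circ (x y : TT) :
    (x * y).circ = x.circ * y.circ ^ ((x.sgn : ℤˣ) : ℤ) := rfl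
@[simp] lemma mul_sgn (x y : TT) : (x * y).sgn = x.sgn * y.sgn := rfl
@[simp] lemma one_circ : (1 : TT).circ = 1 := rfl
@[simp] lemma one_sgn : (1 : TT).sgn = 1 := rfl
@[simp] lemma inv_circ (x : TT) : (x⁻¹).circ = x.circ ^ (-((x.sgn : ℤˣ) : ℤ)) := rfl
@[simp] lemma inv_sgn (x : TT) : (x⁻¹).sgn = x.sgn := rfl

protected lemma ext {x y : TT} (h1 : x.circ = y.circ) (h2 : x.sgn = y.sgn) : x = y :=
  Prod.ext h1 h2

instance instGroup : Group TT where
  mul_assoc x y z := by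
    refine TT.ext ?_ ?_
    · simp [mul_zpow, ← zpow_mul, mul_assoc]
      rw [mul_comm ((x.sgn : ℤˣ) : ℤ)]
    · simp [mul_assoc]
  one_mul x := by refine TT.ext ?_ ?_ <;> simp
  mul_one x := by refine TT.ext ?_ ?_ <;> simp
  inv_mul_cancel x := by
    refine TT.ext ?_ ?_ <;> simp [← zpow_mul, Int.units_mul_self]

end TT

/-- The subset `I ⋊ {-1,1}` of `𝕋 ⋊ {-1,1}` attached to a subset `I ⊆ 𝕋`. -/
def TT.lift (I : Set Circle) : Set TT := {x : TT | x.circ ∈ I}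

section Defs

variable {G : Type*}

/-- `(A,B)` is a critical pair: both sets are Borel of positive measure and
`m(AB) = min(1, m(A)+m(B))`. -/
def IsCriticalPair [Group G] [MeasurableSpace G] (m : Measure G) (A B : Set G) : Prop :=
  MeasurableSet A ∧ MeasurableSet B ∧ 0 < m A ∧ 0 < m B ∧
    m (A * B) = min 1 (m A + m B)

/-- `(A,B)` is a sub-critical pair: both sets are Borel of positive measure and
`m(AB) < min(1, m(A)+m(B))`. -/
def IsSubCriticalPair [Group G] [MeasurableSpace G] (m : Measure G) (A B : Set G) : Prop :=
  MeasurableSet A ∧ MeasurableSet B ∧ 0 < m A ∧ 0 < m B ∧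
    m (A * B) < min 1 (m A + m B)

/-- `(S,T)` is a sub-critical pair in the open subgroup `U` with respect to the Haar
probability measure of `U`; in terms of the ambient Haar probability measure `m` this
reads `m(ST) < min (m U) (m S + m T)`, since the Haar probability measure of `U` is
`m(· ∩ U)/m(U)`. -/
def SubCriticalInOpen [Group G] [MeasurableSpace G] (m : Measure G) (U : Subgroup G)
    (S T : Set G) : Prop :=
  MeasurableSet S ∧ MeasurableSet T ∧ S ⊆ (U : Set G) ∧ T ⊆ (U : Set G) ∧
    0 < m S ∧ 0 < m T ∧ m (S * T) < min (m (U : Set G)) (m S + m T)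

/-- `(A,B)` is almost sub-critical in the open normal subgroup `U`: there are conull
Borel subsets `A' ⊆ A`, `B' ⊆ B` and `p, q ∈ G` such that `(p⁻¹A' ∩ U, B'q⁻¹ ∩ U)` is
a sub-critical pair in `U`. -/
def AlmostSubCriticalIn [Group G] [MeasurableSpace G] (m : Measure G) (U : Subgroup G)
    (A B : Set G) : Prop :=
  ∃ A' B' : Set G, MeasurableSet A' ∧ MeasurableSet B' ∧ A' ⊆ A ∧ B' ⊆ B ∧
    m (A \ A') = 0 ∧ m (B \ B') = 0 ∧
    ∃ p q : G, SubCriticalInOpen m U ((p⁻¹ • A') ∩ (U : Set G))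
      (((· * q⁻¹) '' B') ∩ (U : Set G))

/-- `(A,B)` is locally sub-critical: it is almost sub-critical in some open normal
subgroup of `G`. -/
def LocallySubCritical [Group G] [TopologicalSpace G] [MeasurableSpace G]
    (m : Measure G) (A B : Set G) : Prop :=
  ∃ U : Subgroup G, U.Normal ∧ IsOpen (U : Set G) ∧ AlmostSubCriticalIn m U A B

/-- `(m_G)_x^N`: the pushforward, under right multiplication by `x`, of the Haar
probability measure `μN` of the closed subgroup `N`, viewed as a measure on `G`. -/
def fiberMeasure [Group G] [MeasurableSpace G] (N : Subgroup G)
    (μN : Measure ↥N) (x : G) : Measure G :=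
  Measure.map (fun n : ↥N => (n : G) * x) μN

/-- `(A,B)` is critical with respect to the closed normal subgroup `N` (with Haar
probability measure `μN`). -/
def CriticalWrt [Group G] [MeasurableSpace G] (m : Measure G) (N : Subgroup G)
    (μN : Measure ↥N) (A B : Set G) : Prop :=
  ∃ X : Set G, MeasurableSet X ∧ m Xᶜ = 0 ∧
    ∃ Z : Set (G × G), MeasurableSet Z ∧ (m.prod m) Zᶜ = 0 ∧ Z ⊆ X ×ˢ X ∧
      (∀ x ∈ X, fiberMeasure N μN x A = m A) ∧
      (∀ y ∈ X, fiberMeasure N μN y B = m B) ∧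
      ∀ p ∈ Z, fiberMeasure N μN (p.1 * p.2) (A * B)
        = fiberMeasure N μN p.1 A + fiberMeasure N μN p.2 B

/-- `C⁺ ⊆ G/U`: the set of cosets of `U` meeting `C`. -/
def plusSet [Group G] (U : Subgroup G) (C : Set G) : Set (G ⧸ U) :=
  QuotientGroup.mk '' C

/-- `C ∩ Ux`, the part of `C` lying over the coset `x ∈ G/U`. -/
def cosetFiber [Group G] (U : Subgroup G) (C : Set G) (x : G ⧸ U) : Set G :=
  C ∩ QuotientGroup.mk ⁻¹' {x}

/-- `C` is `U`-balanced: the identity coset belongs to `C⁺` and every coset in `C⁺`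
carries a positive measure part of `C`. -/
def UBalanced [Group G] [MeasurableSpace G] (m : Measure G) (U : Subgroup G)
    (C : Set G) : Prop :=
  QuotientGroup.mk (1 : G) ∈ plusSet U C ∧
    ∀ x ∈ plusSet U C, 0 < m (cosetFiber U C x)

/-- A set is regular if it equals the closure of its interior. -/
def IsRegularSet {X : Type*} [TopologicalSpace X] (I : Set X) : Prop :=
  I = closure (interior I)

/-- `(I,J)` is left stable: `xJ ⊆ IJ` implies `x ∈ I`. -/
def IsLeftStable [Group G] (I J : Set G) : Prop :=
  ∀ x : G, (x * ·) '' J ⊆ I * J → x ∈ I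

/-- `(I,J)` is right stable: `Ix ⊆ IJ` implies `x ∈ J`. -/
def IsRightStable [Group G] (I J : Set G) : Prop :=
  ∀ x : G, (· * x) '' I ⊆ I * J → x ∈ J

/-- `(I,J)` is stable if it is both left and right stable. -/
def IsStablePair [Group G] (I J : Set G) : Prop :=
  IsLeftStable I J ∧ IsRightStable I J

end Defs

/-- A compact connected group `N` (with Haar probability measure `mN`) is a Kneser
group: every critical pair in `N` is covered by translates of closed intervals pulled
back under a continuous surjective homomorphism onto the circle group (here `mT`
denotes the Haar probability measure of the circle group). -/
def IsKneserGroup {N : Type*} [Group N] [TopologicalSpace N] [MeasurableSpace N]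
    (mN : Measure N) (mT : Measure Circle) : Prop :=
  ∀ C D : Set N, IsCriticalPair mN C D →
    ∃ ξ : N →* Circle, Continuous ξ ∧ Function.Surjective ξ ∧
      ∃ I J : Set Circle, IsClosedArc I ∧ IsClosedArc J ∧ mN (C * D) = mT (I * J) ∧
        ∃ s t : Circle, C ⊆ ⇑ξ ⁻¹' ((s * ·) '' I) ∧ D ⊆ ⇑ξ ⁻¹' ((· * t) '' J)

end
open MeasureTheory Set Pointwise Function

/-!
Let `ρ_k` and `ρ` be the Haar probability measures of `N_k` and `N`, pushed forward to `G`, so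
that `(m_G)_x^{N_k}(B) = ρ_k(Bx⁻¹)`.

First, `ρ_k → ρ` weakly. For continuous `φ`, averaging over `N ≤ N_k` gives
`∫ φ dρ_k = ∫ g dρ_k` with `g x = ∫ φ(nx) dρ(n)`; `g` is continuous and constant on `N`
(right invariance of Haar measure on the compact group `N`), and by compactness `N_k` eventually
lies in any neighbourhood of `N = ⋂ N_k`.

Second, by left invariance of `m_G` each operator `f ↦ (x ↦ ∫ f(yx) dρ_k(y))` is a contraction
of `L¹(m_G)`. Approximating `1_B` in `L¹(m_G)` by a bounded continuous function, for which
dominated convergence applies, shows that `x ↦ ρ_k(Bx⁻¹)` tends to `x ↦ ρ(Bx⁻¹)` in `L¹(m_G)`.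
Hence the convergence holds in measure, and along any subsequence a further subsequence
converges almost everywhere.
-/

open Filter Topology BoundedContinuousFunction

theorem isMulRightInvariant_of_isProbabilityMeasure {G : Type*} [Group G] [TopologicalSpace G]
    [IsTopologicalGroup G] [CompactSpace G] [MeasurableSpace G] [BorelSpace G]
    (μ : Measure G) [μ.IsHaarMeasure] [IsProbabilityMeasure μ] : μ.IsMulRightInvariant := by
  refine ⟨fun g => ?_⟩
  have : IsProbabilityMeasure (μ.map (· * g)) :=
    Measure.isProbabilityMeasure_map (measurable_mul_const g).aemeasurable
  exact Measure.isHaarMeasure_eq_of_isProbabilityMeasure _ _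

theorem tendsto_integral_of_eqOn_iInter {X : Type*} [TopologicalSpace X] [CompactSpace X]
    [MeasurableSpace X] [OpensMeasurableSpace X] {K : ℕ → Set X} (hK : ∀ k, IsClosed (K k))
    (hanti : Antitone K) (μ : ∀ k, Measure (K k)) [∀ k, IsProbabilityMeasure (μ k)]
    {g : X → ℝ} (hg : Continuous g) {c : ℝ} (hgc : EqOn g (fun _ => c) (⋂ k, K k)) :
    Tendsto (fun k => ∫ x, g x ∂μ k) atTop (𝓝 c) := by
  rw [Metric.tendsto_atTop]
  intro ε hε
  obtain ⟨k₀, hk₀⟩ : ∃ k₀, K k₀ ⊆ {x | dist (g x) c < ε / 2} :=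
    exists_subset_nhds_of_isCompact' hanti.directed_ge (fun k => (hK k).isCompact) hK
      fun x hx => (isOpen_lt (hg.dist continuous_const) continuous_const).mem_nhds
        (by simp [hgc hx, hε])
  refine ⟨k₀, fun k hk => ?_⟩
  obtain ⟨C, hC⟩ := isCompact_univ.exists_bound_of_continuousOn hg.continuousOn
  have hint : Integrable (fun x : K k => g x) (μ k) :=
    .of_bound (hg.measurable.comp measurable_subtype_coe).aestronglyMeasurable C
      (ae_of_all _ fun x => hC x (mem_univ _))
  have hclose : ∀ x : K k, ‖g x - c‖ ≤ ε / 2 := fun x => (hk₀ (hanti hk x.2)).le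
  calc dist (∫ x, g x ∂μ k) c = ‖∫ x, (g x - c) ∂μ k‖ := by
        rw [integral_sub hint (integrable_const c)]; simp [dist_eq_norm]
    _ ≤ ε / 2 := by simpa using norm_integral_le_of_norm_le_const (ae_of_all (μ k) hclose)
    _ < ε := half_lt_self hε

section CompactGroup

variable {G : Type*} [Group G] [TopologicalSpace G] [IsTopologicalGroup G] [CompactSpace G]
  [SecondCountableTopology G] [MeasurableSpace G] [BorelSpace G]

theorem integral_eq_integral_integral_mul_of_le {M N : Subgroup G} (hNM : N ≤ M)
    (μM : Measure M) [IsFiniteMeasure μM] [μM.IsMulLeftInvariant]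
    (μN : Measure N) [IsProbabilityMeasure μN] {φ : G → ℝ} (hφ : Continuous φ) :
    ∫ m, φ m ∂μM = ∫ m : M, ∫ n : N, φ (n * m) ∂μN ∂μM := by
  obtain ⟨C, hC⟩ := isCompact_univ.exists_bound_of_continuousOn hφ.continuousOn
  have hint : Integrable (uncurry fun (m : M) (n : N) => φ (n * m)) (μM.prod μN) :=
    .of_bound (hφ.measurable.comp ((measurable_subtype_coe.comp measurable_snd).mul
      (measurable_subtype_coe.comp measurable_fst))).aestronglyMeasurable C
      (ae_of_all _ fun p => hC _ (mem_univ _))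
  have hinv : ∀ n : N, ∫ m : M, φ (n * m) ∂μM = ∫ m : M, φ m ∂μM := fun n =>
    integral_mul_left_eq_self (fun m : M => φ m) (Subgroup.inclusion hNM n)
  simp [integral_integral_swap hint, hinv]

theorem tendsto_integral_map_haar_of_antitone {Nseq : ℕ → Subgroup G}
    (hclosed : ∀ k, IsClosed (Nseq k : Set G)) (hanti : Antitone Nseq) {N : Subgroup G}
    (hN : N = ⨅ k, Nseq k) (μs : ∀ k, Measure (Nseq k)) [∀ k, IsProbabilityMeasure (μs k)]
    [∀ k, (μs k).IsMulLeftInvariant] (μN : Measure N) [μN.IsHaarMeasure]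
    [IsProbabilityMeasure μN] {φ : G → ℝ} (hφ : Continuous φ) :
    Tendsto (fun k => ∫ x, φ x ∂(μs k).map Subtype.val) atTop
      (𝓝 (∫ x, φ x ∂μN.map Subtype.val)) := by
  have hNs : (N : Set G) = ⋂ k, (Nseq k : Set G) := by rw [hN, Subgroup.coe_iInf]
  have : CompactSpace N :=
    isCompact_iff_compactSpace.mp (hNs ▸ isClosed_iInter hclosed).isCompact
  have : μN.IsMulRightInvariant := isMulRightInvariant_of_isProbabilityMeasure μN
  obtain ⟨C, hC⟩ := isCompact_univ.exists_bound_of_continuousOn hφ.continuousOn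
  have hg : Continuous fun x => ∫ n : N, φ (n * x) ∂μN :=
    continuous_of_dominated
      (fun x => (hφ.comp (continuous_subtype_val.mul continuous_const)).aestronglyMeasurable)
      (fun x => ae_of_all _ fun n => hC _ (mem_univ _)) (integrable_const C)
      (ae_of_all _ fun n => hφ.comp (continuous_const.mul continuous_id))
  have hgN : EqOn (fun x => ∫ n : N, φ (n * x) ∂μN) (fun _ => ∫ n : N, φ n ∂μN)
      (⋂ k, (Nseq k : Set G)) := fun x hx =>
    integral_mul_right_eq_self (fun n : N => φ n) ⟨x, (hNs.symm ▸ hx : x ∈ (N : Set G))⟩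
  simp only [integral_map continuous_subtype_val.aemeasurable hφ.aestronglyMeasurable]
  simp_rw [integral_eq_integral_integral_mul_of_le (hN ▸ iInf_le Nseq _) _ μN hφ]
  exact tendsto_integral_of_eqOn_iInter hclosed (fun _ _ h => hanti h) μs hg hgN

end CompactGroup

section RightTranslateAverage

variable {G E : Type*} [Group G] [MeasurableSpace G] [NormedAddCommGroup E] [NormedSpace ℝ E]

noncomputable def rightTranslateAverage (ρ : Measure G) (u : G → E) (x : G) : E :=
  ∫ y, u (y * x) ∂ρ

theorem rightTranslateAverage_sub [MeasurableMul G] (ρ : Measure G) [IsFiniteMeasure ρ]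
    {f g : G → E} (hf : StronglyMeasurable f) (hg : StronglyMeasurable g) {C D : ℝ}
    (hfC : ∀ x, ‖f x‖ ≤ C) (hgD : ∀ x, ‖g x‖ ≤ D) :
    rightTranslateAverage ρ f - rightTranslateAverage ρ g = rightTranslateAverage ρ (f - g) :=
  funext fun x => (integral_sub
    (.of_bound (hf.comp_measurable (measurable_mul_const x)).aestronglyMeasurable C
      (ae_of_all ρ fun _ => hfC _))
    (.of_bound (hg.comp_measurable (measurable_mul_const x)).aestronglyMeasurable D
      (ae_of_all ρ fun _ => hgD _))).symm

variable [MeasurableMul₂ G]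

theorem stronglyMeasurable_rightTranslateAverage (ρ : Measure G) [SFinite ρ] {u : G → E}
    (hu : StronglyMeasurable u) : StronglyMeasurable (rightTranslateAverage ρ u) :=
  (hu.comp_measurable (measurable_snd.mul measurable_fst)).integral_prod_right'

theorem eLpNorm_rightTranslateAverage_le (μ : Measure G) [SFinite μ] [μ.IsMulLeftInvariant]
    (ρ : Measure G) [IsProbabilityMeasure ρ] {u : G → E} (hu : StronglyMeasurable u) :
    eLpNorm (rightTranslateAverage ρ u) 1 μ ≤ eLpNorm u 1 μ := by
  simp only [eLpNorm_one_eq_lintegral_enorm, rightTranslateAverage]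
  calc ∫⁻ x, ‖∫ y, u (y * x) ∂ρ‖ₑ ∂μ ≤ ∫⁻ x, ∫⁻ y, ‖u (y * x)‖ₑ ∂ρ ∂μ :=
        lintegral_mono fun x => enorm_integral_le_lintegral_enorm _
    _ = ∫⁻ y, ∫⁻ x, ‖u (y * x)‖ₑ ∂μ ∂ρ :=
        lintegral_lintegral_swap
          (hu.enorm.comp (measurable_snd.mul measurable_fst)).aemeasurable
    _ = ∫⁻ z, ‖u z‖ₑ ∂μ := by
        simp [lintegral_mul_left_eq_self fun z => ‖u z‖ₑ]

theorem eLpNorm_rightTranslateAverage_sub_le (μ : Measure G) [SFinite μ]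
    [μ.IsMulLeftInvariant] (ρ ρ' : Measure G) [IsProbabilityMeasure ρ] [IsProbabilityMeasure ρ']
    {f g : G → E} (hf : StronglyMeasurable f) (hg : StronglyMeasurable g) {C D : ℝ}
    (hfC : ∀ x, ‖f x‖ ≤ C) (hgD : ∀ x, ‖g x‖ ≤ D) :
    eLpNorm (rightTranslateAverage ρ f - rightTranslateAverage ρ' f) 1 μ ≤
      eLpNorm (f - g) 1 μ + eLpNorm (rightTranslateAverage ρ g - rightTranslateAverage ρ' g) 1 μ
        + eLpNorm (f - g) 1 μ := by
  set A := fun (ν : Measure G) (u : G → E) => rightTranslateAverage ν u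
  have hA : ∀ (ν : Measure G) [SFinite ν] {u : G → E}, StronglyMeasurable u →
      AEStronglyMeasurable (A ν u) μ := fun ν _ _ hu =>
    (stronglyMeasurable_rightTranslateAverage ν hu).aestronglyMeasurable
  have h₁ := (hA ρ hf).sub (hA ρ hg)
  have h₂ := (hA ρ hg).sub (hA ρ' hg)
  have h₃ := (hA ρ' hf).sub (hA ρ' hg)
  calc eLpNorm (A ρ f - A ρ' f) 1 μ
      = eLpNorm ((A ρ f - A ρ g) + (A ρ g - A ρ' g) - (A ρ' f - A ρ' g)) 1 μ := by
        congr 1; abel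
    _ ≤ eLpNorm (A ρ f - A ρ g) 1 μ + eLpNorm (A ρ g - A ρ' g) 1 μ
        + eLpNorm (A ρ' f - A ρ' g) 1 μ :=
        (eLpNorm_sub_le (h₁.add h₂) h₃ le_rfl).trans
          (add_le_add (eLpNorm_add_le h₁ h₂ le_rfl) le_rfl)
    _ ≤ eLpNorm (f - g) 1 μ + eLpNorm (A ρ g - A ρ' g) 1 μ + eLpNorm (f - g) 1 μ := by
        simp only [A, rightTranslateAverage_sub _ hf hg hfC hgD]
        gcongr <;> exact eLpNorm_rightTranslateAverage_le μ _ (hf.sub hg)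

variable [TopologicalSpace G] [ContinuousMul G] [OpensMeasurableSpace G]

theorem tendsto_eLpNorm_rightTranslateAverage_sub_of_boundedContinuous (μ : Measure G)
    [IsFiniteMeasure μ] (ρ : ℕ → Measure G) [∀ k, IsProbabilityMeasure (ρ k)]
    (ρ' : Measure G) [IsProbabilityMeasure ρ']
    (hρ : ∀ φ : G →ᵇ ℝ, Tendsto (fun k => ∫ x, φ x ∂ρ k) atTop (𝓝 (∫ x, φ x ∂ρ')))
    (φ : G →ᵇ ℝ) :
    Tendsto (fun k => eLpNorm (rightTranslateAverage (ρ k) φ - rightTranslateAverage ρ' φ) 1 μ)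
      atTop (𝓝 0) := by
  have hbound : ∀ (ν : Measure G) [IsProbabilityMeasure ν] (x : G),
      ‖rightTranslateAverage ν φ x‖ ≤ ‖φ‖ := fun ν _ x => by
    simpa [rightTranslateAverage] using
      norm_integral_le_of_norm_le_const (ae_of_all ν fun y => φ.norm_coe_le_norm (y * x))
  simp only [eLpNorm_one_eq_lintegral_enorm, Pi.sub_apply, ← ofReal_norm]
  exact tendsto_lintegral_norm_of_dominated_convergence
    (fun k => (stronglyMeasurable_rightTranslateAverage (ρ k)
      φ.continuous.measurable.stronglyMeasurable).aestronglyMeasurable)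
    (hasFiniteIntegral_const ‖φ‖) (fun k => ae_of_all μ (hbound (ρ k)))
    (ae_of_all μ fun x => hρ (φ.compContinuous ⟨(· * x), continuous_mul_const x⟩))

end RightTranslateAverage

theorem tendsto_eLpNorm_rightTranslateAverage_sub {G : Type*} [Group G] [MeasurableSpace G]
    [MeasurableMul₂ G] [TopologicalSpace G] [ContinuousMul G] [NormalSpace G] [BorelSpace G]
    (μ : Measure G) [IsFiniteMeasure μ] [μ.IsMulLeftInvariant] [μ.WeaklyRegular]
    (ρ : ℕ → Measure G) [∀ k, IsProbabilityMeasure (ρ k)] (ρ' : Measure G)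
    [IsProbabilityMeasure ρ']
    (hρ : ∀ φ : G →ᵇ ℝ, Tendsto (fun k => ∫ x, φ x ∂ρ k) atTop (𝓝 (∫ x, φ x ∂ρ')))
    {f : G → ℝ} (hf : StronglyMeasurable f) {C : ℝ} (hfC : ∀ x, ‖f x‖ ≤ C) :
    Tendsto (fun k => eLpNorm (rightTranslateAverage (ρ k) f - rightTranslateAverage ρ' f) 1 μ)
      atTop (𝓝 0) := by
  rw [ENNReal.tendsto_nhds_zero]
  intro ε hε
  have hε3 : 0 < ε / 3 := ENNReal.div_pos hε.ne' (by simp)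
  obtain ⟨φ, hfφ, -⟩ := (MemLp.of_bound hf.aestronglyMeasurable C (ae_of_all μ hfC)
    ).exists_boundedContinuous_eLpNorm_sub_le ENNReal.one_ne_top hε3.ne'
  filter_upwards [ENNReal.tendsto_nhds_zero.1
    (tendsto_eLpNorm_rightTranslateAverage_sub_of_boundedContinuous μ ρ ρ' hρ φ) (ε / 3) hε3]
    with k hk
  calc _ ≤ _ := eLpNorm_rightTranslateAverage_sub_le μ (ρ k) ρ' hf
        φ.continuous.measurable.stronglyMeasurable hfC φ.norm_coe_le_norm
    _ ≤ ε / 3 + ε / 3 + ε / 3 := by gcongr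
    _ = ε := ENNReal.add_thirds ε

instance isProbabilityMeasure_fiberMeasure {G : Type*} [Group G] [MeasurableSpace G]
    [MeasurableMul G] (N : Subgroup G) (μN : Measure N) [IsProbabilityMeasure μN] (x : G) :
    IsProbabilityMeasure (fiberMeasure N μN x) :=
  Measure.isProbabilityMeasure_map (measurable_subtype_coe.mul_const x).aemeasurable

theorem fiberMeasure_toReal_eq_rightTranslateAverage {G : Type*} [Group G] [MeasurableSpace G]
    [MeasurableMul G] (N : Subgroup G) (μN : Measure N) (x : G) {B : Set G}
    (hB : MeasurableSet B) :
    (fiberMeasure N μN x B).toReal =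
      rightTranslateAverage (μN.map Subtype.val) (B.indicator 1) x := by
  have hmap : fiberMeasure N μN x = (μN.map Subtype.val).map (· * x) :=
    (Measure.map_map (measurable_mul_const x) measurable_subtype_coe).symm
  rw [hmap, Measure.map_apply (measurable_mul_const x) hB, ← measureReal_def,
    ← integral_indicator_one (measurable_mul_const x hB)]
  rfl

theorem fiber_measures_of_decreasing_subgroups_converge_general
    {G : Type*} [Group G] [TopologicalSpace G] [IsTopologicalGroup G] [CompactSpace G]
    [SecondCountableTopology G] [MeasurableSpace G] [BorelSpace G]
    (mG : Measure G) [mG.IsHaarMeasure] [IsProbabilityMeasure mG]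
    (Nseq : ℕ → Subgroup G) (hclosed : ∀ k, IsClosed (Nseq k : Set G))
    (hdec : ∀ k, Nseq (k + 1) ≤ Nseq k)
    (N : Subgroup G) (hN : N = ⨅ k, Nseq k)
    (μs : ∀ k, Measure ↥(Nseq k))
    (hμs : ∀ k, (μs k).IsHaarMeasure ∧ IsProbabilityMeasure (μs k))
    (μN : Measure ↥N) [μN.IsHaarMeasure] [IsProbabilityMeasure μN]
    (B : Set G) (hB : MeasurableSet B) (nk : ℕ → ℕ) (hnk : StrictMono nk) :
    ∃ j : ℕ → ℕ, StrictMono j ∧ ∃ X : Set G, MeasurableSet X ∧ mG Xᶜ = 0 ∧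
      ∀ x ∈ X,
        Filter.Tendsto (fun i => fiberMeasure (Nseq (nk (j i))) (μs (nk (j i))) x B)
          Filter.atTop (nhds (fiberMeasure N μN x B)) := by
  have := fun k => (hμs k).1
  have := fun k => (hμs k).2
  have := fun k => Measure.isProbabilityMeasure_map (μ := μs k) measurable_subtype_coe.aemeasurable
  have := Measure.isProbabilityMeasure_map (μ := μN) measurable_subtype_coe.aemeasurable
  have hf : StronglyMeasurable (B.indicator (1 : G → ℝ)) := stronglyMeasurable_one.indicator hB
  have hL1 := tendsto_eLpNorm_rightTranslateAverage_sub mG (fun k => (μs k).map Subtype.val)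
    (μN.map Subtype.val) (fun φ => tendsto_integral_map_haar_of_antitone hclosed
      (antitone_nat_of_succ_le hdec) hN μs μN φ.continuous)
    hf (C := 1) (fun x => (norm_indicator_le_norm_self _ x).trans (by simp))
  obtain ⟨j, hj, hae⟩ := (tendstoInMeasure_of_tendsto_eLpNorm one_ne_zero
    (fun _ => (stronglyMeasurable_rightTranslateAverage _ hf).aestronglyMeasurable)
    (stronglyMeasurable_rightTranslateAverage _ hf).aestronglyMeasurable
    (hL1.comp hnk.tendsto_atTop)).exists_seq_tendsto_ae
  obtain ⟨Y, hbad, hYm, hY⟩ := exists_measurable_superset_of_null (ae_iff.1 hae)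
  refine ⟨j, hj, Yᶜ, hYm.compl, by rwa [compl_compl], fun x hx => ?_⟩
  rw [← ENNReal.tendsto_toReal_iff (fun _ => measure_ne_top _ _) (measure_ne_top _ _)]
  simp only [fiberMeasure_toReal_eq_rightTranslateAverage _ _ x hB]
  by_contra h
  exact hx (hbad h)

/-- Corollary `conv subgroups`: for a decreasing sequence of
closed subgroups `N_k` with intersection `N`, every Borel set `B` and every
subsequence admit a further subsequence along which `(m_G)_x^{N_k}(B) → (m_G)_x^N(B)`
for Haar-almost every `x`. -/
theorem fiber_measures_of_decreasing_subgroups_converge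
    {G : Type*} [Group G] [TopologicalSpace G] [IsTopologicalGroup G] [CompactSpace G]
    [SecondCountableTopology G] [T2Space G] [MeasurableSpace G] [BorelSpace G]
    (mG : Measure G) [mG.IsHaarMeasure] [IsProbabilityMeasure mG]
    (Nseq : ℕ → Subgroup G) (hclosed : ∀ k, IsClosed (Nseq k : Set G))
    (hdec : ∀ k, Nseq (k + 1) ≤ Nseq k)
    (N : Subgroup G) (hN : N = ⨅ k, Nseq k)
    (μs : ∀ k, Measure ↥(Nseq k))
    (hμs : ∀ k, (μs k).IsHaarMeasure ∧ IsProbabilityMeasure (μs k))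
    (μN : Measure ↥N) [μN.IsHaarMeasure] [IsProbabilityMeasure μN]
    (B : Set G) (hB : MeasurableSet B) (nk : ℕ → ℕ) (hnk : StrictMono nk) :
    ∃ j : ℕ → ℕ, StrictMono j ∧ ∃ X : Set G, MeasurableSet X ∧ mG Xᶜ = 0 ∧
      ∀ x ∈ X,
        Filter.Tendsto (fun i => fiberMeasure (Nseq (nk (j i))) (μs (nk (j i))) x B)
          Filter.atTop (nhds (fiberMeasure N μN x B)) :=
  fiber_measures_of_decreasing_subgroups_converge_general mG Nseq hclosed hdec N hN μs hμs μN B hB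
    nk hnk
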